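/- arXiv:1312.6569 — 2 statements merged into one kernel-verified Lean document; each statement's English description precedes it below -/
import Mathlib

section
/- Let B be an associative algebra over ℂ. If φ is a cyclic (p+1)-linear functional on B, meaning φ(a₀,a₁,…,a_p) = (-1)^p φ(a_p,a₀,a₁,…,a_{p-1}) for all arguments, then the Hochschild coboundary bφ is a cyclic (p+2)-linear functional. -/
/-! Write `bφ(a) = ∑_{j=0}^{p+1} (-1)^j φ(d_j a)` with faces `d_j`. Rotating the arguments one step
to the right turns the wrap-around face `d_{p+1} a` into `d_0` of the rotated tuple, and `d_{j+1}`
of the rotated tuple into the rotation of `d_j a`. Cyclicity of `φ` gives each of the latter terms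
the sign `(-1)^p`, so `b` multiplies by `(-1)^{p+1}` under rotation. -/

/-- The Hochschild coboundary `b` sending a `p`-cochain (a `(p+1)`-linear functional)
on an associative algebra `B` to a `(p+1)`-cochain. -/
noncomputable def hochschildB {B : Type*} [NonUnitalRing B] [Module ℂ B]
    (p : ℕ) (φ : (Fin (p + 1) → B) → ℂ) : (Fin (p + 2) → B) → ℂ :=
  fun a =>
    (∑ j : Fin (p + 1), (-1 : ℂ) ^ (j : ℕ) *
      φ (fun i => if (i : ℕ) < (j : ℕ) then a i.castSucc
          else if (i : ℕ) = (j : ℕ) then a i.castSucc * a i.succ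
          else a i.succ))
    + (-1 : ℂ) ^ (p + 1) *
      φ (fun i => if (i : ℕ) = 0 then a (Fin.last (p + 1)) * a 0 else a i.castSucc)

/-- A `(p+1)`-linear functional `φ` is cyclic if
`φ(a₀,a₁,…,a_p) = (-1)^p φ(a_p,a₀,…,a_{p-1})`. -/
def IsCyclicCochain {B : Type*} [NonUnitalRing B] [Module ℂ B]
    (p : ℕ) (φ : (Fin (p + 1) → B) → ℂ) : Prop :=
  ∀ a : Fin (p + 1) → B, φ a = (-1 : ℂ) ^ p * φ (fun i => a (i - 1))

theorem Fin.succ_sub_one_eq_castSucc {n : ℕ} (k : Fin n) : k.succ - 1 = k.castSucc := by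
  ext; simp [Fin.coe_sub_one]

theorem Fin.zero_sub_one_eq_last (n : ℕ) : (0 : Fin (n + 1)) - 1 = Fin.last n := by
  ext; simp

def cyclicShift {B : Type*} {n : ℕ} (a : Fin (n + 1) → B) : Fin (n + 1) → B :=
  fun i => a (i - 1)

theorem cyclicShift_zero {B : Type*} {n : ℕ} (a : Fin (n + 1) → B) :
    cyclicShift a 0 = a (Fin.last n) :=
  congrArg a (Fin.zero_sub_one_eq_last n)

theorem cyclicShift_succ {B : Type*} {n : ℕ} (a : Fin (n + 1) → B) (k : Fin n) :
    cyclicShift a k.succ = a k.castSucc :=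
  congrArg a (Fin.succ_sub_one_eq_castSucc k)

theorem isCyclicCochain_iff {B : Type*} [NonUnitalRing B] [Module ℂ B] {p : ℕ}
    {φ : (Fin (p + 1) → B) → ℂ} :
    IsCyclicCochain p φ ↔ ∀ a, φ (cyclicShift a) = (-1) ^ p * φ a := by
  have h : ∀ x y : ℂ, x = (-1) ^ p * y ↔ y = (-1) ^ p * x := fun x y => by
    constructor <;> rintro rfl <;> rw [← mul_assoc, ← mul_pow] <;> simp
  exact forall_congr' fun a => h _ _

/-- The face `d_j a` with `bφ(a) = ∑ⱼ (-1)^j φ(d_j a)`: for `j ≤ p` it merges `a_j a_{j+1}` in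
place, and `d_{p+1} a = (a_{p+1} a_0, a_1, …, a_p)`. -/
def hochschildFace {B : Type*} [Mul B] {p : ℕ} (j : Fin (p + 2)) (a : Fin (p + 2) → B) :
    Fin (p + 1) → B :=
  Fin.lastCases (fun i => if (i : ℕ) = 0 then a (Fin.last (p + 1)) * a 0 else a i.castSucc)
    (fun j i => if (i : ℕ) < (j : ℕ) then a i.castSucc
      else if (i : ℕ) = (j : ℕ) then a i.castSucc * a i.succ else a i.succ) j

theorem hochschildB_eq_sum {B : Type*} [NonUnitalRing B] [Module ℂ B] (p : ℕ)
    (φ : (Fin (p + 1) → B) → ℂ) (a : Fin (p + 2) → B) :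
    hochschildB p φ a = ∑ j : Fin (p + 2), (-1) ^ (j : ℕ) * φ (hochschildFace j a) := by
  simp [Fin.sum_univ_castSucc, hochschildB, hochschildFace]

theorem hochschildFace_zero_cyclicShift {B : Type*} [Mul B] {p : ℕ} (a : Fin (p + 2) → B) :
    hochschildFace 0 (cyclicShift a) = hochschildFace (Fin.last _) a := by
  funext i
  rw [← Fin.castSucc_zero]
  simp only [hochschildFace, Fin.lastCases_castSucc, Fin.lastCases_last]
  cases i using Fin.cases <;>
    simp only [← Fin.succ_last, ← Fin.succ_castSucc, Fin.castSucc_zero, cyclicShift_zero,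
      cyclicShift_succ] <;>
    simp

theorem hochschildFace_succ_cyclicShift {B : Type*} [Mul B] {p : ℕ} (a : Fin (p + 2) → B)
    (j : Fin (p + 1)) :
    hochschildFace j.succ (cyclicShift a) = cyclicShift (hochschildFace j.castSucc a) := by
  funext i
  cases j using Fin.lastCases with
  | last =>
    simp only [hochschildFace, Fin.succ_last, Fin.lastCases_castSucc, Fin.lastCases_last]
    cases i using Fin.cases <;>
      simp only [← Fin.succ_last, ← Fin.succ_castSucc, Fin.castSucc_zero, cyclicShift_zero,
        cyclicShift_succ] <;>
      simp
  | cast k =>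
    simp only [hochschildFace, Fin.succ_castSucc, Fin.lastCases_castSucc]
    cases i using Fin.cases <;>
      simp only [← Fin.succ_last, ← Fin.succ_castSucc, Fin.castSucc_zero, cyclicShift_zero,
        cyclicShift_succ] <;>
      simp [k.is_lt.ne', k.is_lt.asymm]

theorem hochschildB_cyclicShift {B : Type*} [NonUnitalRing B] [Module ℂ B] {p : ℕ}
    {φ : (Fin (p + 1) → B) → ℂ} (hφ : IsCyclicCochain p φ) (a : Fin (p + 2) → B) :
    hochschildB p φ (cyclicShift a) = (-1) ^ (p + 1) * hochschildB p φ a := by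
  rw [hochschildB_eq_sum, hochschildB_eq_sum, Fin.sum_univ_succ,
    Fin.sum_univ_castSucc (n := p + 1), hochschildFace_zero_cyclicShift, mul_add,
    Finset.mul_sum, add_comm]
  simp only [hochschildFace_succ_cyclicShift, isCyclicCochain_iff.mp hφ, Fin.val_zero,
    Fin.val_succ, Fin.val_castSucc, Fin.val_last]
  congr 1
  · exact Finset.sum_congr rfl fun j _ => by ring
  · rw [← mul_assoc, ← mul_pow, neg_one_mul, neg_neg, one_pow, pow_zero]

/-- If `φ` is a cyclic `(p+1)`-linear functional on an associative algebra `B` over `ℂ`,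
then its Hochschild coboundary `bφ` is a cyclic `(p+2)`-linear functional. -/
theorem isCyclicCochain_hochschildB {B : Type*} [NonUnitalRing B] [Module ℂ B] (p : ℕ)
    (φ : MultilinearMap ℂ (fun _ : Fin (p + 1) => B) ℂ)
    (hφ : IsCyclicCochain p ⇑φ) :
    IsCyclicCochain (p + 1) (hochschildB p ⇑φ) :=
  isCyclicCochain_iff.mpr (hochschildB_cyclicShift hφ)
end

section
/- Let B be a unital algebra, φ a trace on B, n an even integer with n ≥ 4, and W₂,…,W_{n-1} ∈ B. Suppose i ∈ {2,…,n-1}. Then Σ_{π ∈ S'} sgn(π) φ(W_i · W_{π(2)} W_{π(3)} ⋯ W_{π(n-1)}) = 0, where S' is the group of permutations of {2,…,n-1}. -/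
/-!
Put `W j` in front of the word: `V = Fin.cons (W j) W : Fin (m + 1) → M`, and let
`F τ = sign τ * t (V (τ 0) ⋯ V (τ m))` for permutations `τ` of `Fin (m + 1)`. As `m + 1` is odd,
`finRotate (m + 1)` is an even permutation, so cyclicity of `t` makes `F` invariant under right
multiplication by rotations. Every `τ` is uniquely `π' * ρ` with `π'` fixing `0` and `ρ` a
rotation, hence `∑ τ, F τ` is `m + 1` times the sum in question. On the other hand
`V 0 = V j.succ`, so left multiplication by `swap 0 j.succ` negates `F` and `∑ τ, F τ = 0`.
-/

open Equiv Finset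

theorem List.ofFn_comp_finRotate {α : Type*} {n : ℕ} (g : Fin (n + 1) → α) :
    List.ofFn (fun i => g (finRotate (n + 1) i)) = (List.ofFn g).rotate 1 := by
  rw [← Fin.cons_self_tail g, ← Fin.snoc_eq_cons_rotate, List.ofFn_cons, List.ofFn_succ']
  simp

theorem finRotate_pow_apply {n : ℕ} (k : Fin n) (i : Fin n) :
    (finRotate n ^ (k : ℕ)) i = i + k := by
  rw [Perm.coe_pow, ← finCycle_eq_finRotate_iterate, finCycle_apply]

theorem Equiv.Perm.bijective_decomposeFin_symm_zero_mul_finRotate_pow (m : ℕ) :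
    Function.Bijective fun p : Perm (Fin m) × Fin (m + 1) =>
      Perm.decomposeFin.symm (0, p.1) * finRotate (m + 1) ^ (p.2 : ℕ) := by
  rw [Fintype.bijective_iff_injective_and_card]
  refine ⟨fun ⟨π, r⟩ ⟨π', r'⟩ h => ?_, by simp [Fintype.card_perm, Nat.factorial_succ, mul_comm]⟩
  have hr : -r + r' = 0 := by
    have h0 := congrArg (fun τ : Perm (Fin (m + 1)) => τ (-r)) h
    simp only [Perm.mul_apply, finRotate_pow_apply, neg_add_cancel,
      Perm.decomposeFin_symm_apply_zero] at h0
    exact (Perm.decomposeFin.symm (0, π')).injective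
      (h0.symm.trans (Perm.decomposeFin_symm_apply_zero 0 π').symm)
  obtain rfl : r = r' := by rwa [neg_add_eq_zero] at hr
  simpa using h

theorem Even.sign_finRotate_succ {n : ℕ} (hn : Even n) : Perm.sign (finRotate (n + 1)) = 1 := by
  rw [sign_finRotate, Nat.add_sub_cancel, hn.neg_one_pow]

theorem apply_prod_rotate {M β : Type*} [Monoid M] {t : M → β}
    (ht : ∀ x y, t (x * y) = t (y * x)) (l : List M) (k : ℕ) :
    t (l.rotate k).prod = t l.prod := by
  rw [List.rotate_eq_drop_append_take_mod, List.prod_append, ht, ← List.prod_append,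
    List.take_append_drop]

section SignedTraceWord

variable {M R : Type*} [Monoid M] [Ring R] (t : M → R)

def signedTraceWord {n : ℕ} (V : Fin n → M) (τ : Perm (Fin n)) : R :=
  ((Perm.sign τ : ℤ) : R) * t (List.ofFn fun s => V (τ s)).prod

variable {t}

theorem signedTraceWord_mul_finRotate (ht : ∀ x y, t (x * y) = t (y * x)) {n : ℕ}
    (hn : Even n) (V : Fin (n + 1) → M) (τ : Perm (Fin (n + 1))) :
    signedTraceWord t V (τ * finRotate (n + 1)) = signedTraceWord t V τ := by
  simp only [signedTraceWord, Perm.sign_mul, hn.sign_finRotate_succ, mul_one, Perm.mul_apply,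
    List.ofFn_comp_finRotate fun s => V (τ s), apply_prod_rotate ht]

theorem signedTraceWord_mul_finRotate_pow (ht : ∀ x y, t (x * y) = t (y * x)) {n : ℕ}
    (hn : Even n) (V : Fin (n + 1) → M) (τ : Perm (Fin (n + 1))) (k : ℕ) :
    signedTraceWord t V (τ * finRotate (n + 1) ^ k) = signedTraceWord t V τ := by
  induction k with
  | zero => rw [pow_zero, mul_one]
  | succ k ih => rw [pow_succ, ← mul_assoc, signedTraceWord_mul_finRotate ht hn, ih]

theorem signedTraceWord_swap_mul {n : ℕ} {V : Fin n → M} {i j : Fin n} (hij : i ≠ j)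
    (hV : V i = V j) (τ : Perm (Fin n)) :
    signedTraceWord t V (swap i j * τ) = -signedTraceWord t V τ := by
  have hVswap : ∀ s, V (swap i j s) = V s := by
    intro s
    rcases eq_or_ne s i with rfl | hsi
    · simp [hV]
    rcases eq_or_ne s j with rfl | hsj
    · simp [hV]
    · rw [swap_apply_of_ne_of_ne hsi hsj]
  simp [signedTraceWord, Perm.sign_swap hij, hVswap]

theorem sum_signedTraceWord_eq_zero [IsAddTorsionFree R] {n : ℕ} {V : Fin n → M} {i j : Fin n}
    (hij : i ≠ j) (hV : V i = V j) : ∑ τ, signedTraceWord t V τ = 0 := by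
  rw [← self_eq_neg, ← sum_neg_distrib]
  simp_rw [← signedTraceWord_swap_mul hij hV]
  exact (Equiv.sum_comp (Equiv.mulLeft (swap i j)) _).symm

theorem signedTraceWord_decomposeFin_symm_zero {m : ℕ} (a : M) (W : Fin m → M)
    (π : Perm (Fin m)) :
    signedTraceWord t (Fin.cons a W : Fin (m + 1) → M) (Perm.decomposeFin.symm (0, π)) =
      ((Perm.sign π : ℤ) : R) * t (a * (List.ofFn fun s => W (π s)).prod) := by
  simp [signedTraceWord, List.ofFn_succ]

theorem sum_signedTraceWord_cons_eq_nsmul (ht : ∀ x y, t (x * y) = t (y * x)) {m : ℕ}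
    (hm : Even m) (a : M) (W : Fin m → M) :
    ∑ τ, signedTraceWord t (Fin.cons a W : Fin (m + 1) → M) τ =
      (m + 1) • ∑ π : Perm (Fin m), ((Perm.sign π : ℤ) : R) *
        t (a * (List.ofFn fun s => W (π s)).prod) := by
  rw [← Fintype.sum_bijective _ (Perm.bijective_decomposeFin_symm_zero_mul_finRotate_pow m) _ _
    fun _ => rfl, Fintype.sum_prod_type_right]
  simp only [signedTraceWord_mul_finRotate_pow ht hm, signedTraceWord_decomposeFin_symm_zero,
    sum_const, card_univ, Fintype.card_fin]

theorem sum_sign_mul_apply_mul_prod_ofFn_eq_zero [IsAddTorsionFree R]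
    (ht : ∀ x y, t (x * y) = t (y * x)) {m : ℕ} (hm : Even m) (W : Fin m → M) (j : Fin m) :
    ∑ π : Perm (Fin m), ((Perm.sign π : ℤ) : R) * t (W j * (List.ofFn fun s => W (π s)).prod)
      = 0 := by
  rw [← nsmul_eq_zero_iff_right m.succ_ne_zero, ← sum_signedTraceWord_cons_eq_nsmul ht hm]
  exact sum_signedTraceWord_eq_zero (Fin.succ_ne_zero j).symm rfl

end SignedTraceWord

theorem alternating_trace_sum_with_repeat_eq_zero_general {B : Type*} [Ring B] [Algebra ℂ B]
    (φ : B →ₗ[ℂ] ℂ) (hφ : ∀ x y : B, φ (x * y) = φ (y * x))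
    (n : ℕ) (hn : Even n) (W : Fin (n - 2) → B) (j : Fin (n - 2)) :
    ∑ π : Equiv.Perm (Fin (n - 2)),
      ((Equiv.Perm.sign π : ℤ) : ℂ) * φ (W j * (List.ofFn fun t => W (π t)).prod) = 0 :=
  sum_sign_mul_apply_mul_prod_ofFn_eq_zero hφ (hn.tsub even_two) W j

/-- Vanishing claim (3.4): let `φ` be a trace on a `ℂ`-algebra `B`, `n` even with
`n ≥ 4`, and `W₂,…,W_{n-1} ∈ B` (indexed here by `Fin (n-2)`). Then for any index
`j` in this range,
`∑_{π ∈ S'} sgn(π) φ(W_j · W_{π(2)} ⋯ W_{π(n-1)}) = 0`,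
where `S'` is the group of permutations of `{2,…,n-1}`. -/
theorem alternating_trace_sum_with_repeat_eq_zero {B : Type*} [Ring B] [Algebra ℂ B]
    (φ : B →ₗ[ℂ] ℂ) (hφ : ∀ x y : B, φ (x * y) = φ (y * x))
    (n : ℕ) (hn : Even n) (h4 : 4 ≤ n) (W : Fin (n - 2) → B) (j : Fin (n - 2)) :
    ∑ π : Equiv.Perm (Fin (n - 2)),
      ((Equiv.Perm.sign π : ℤ) : ℂ) * φ (W j * (List.ofFn fun t => W (π t)).prod) = 0 :=
  alternating_trace_sum_with_repeat_eq_zero_general φ hφ n hn W j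
end
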